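/- Let A₁ and A₂ be answer sets of a ground Alog program Π with A₁ ⊆ A₂. Then A₁ satisfies every rule of the aggregate reduct of Π with respect to A₂. -/

import Mathlib

/- A formalization of ground Alog programs (logic programs with aggregates),
   following Gelfond & Zhang, "Vicious Circle Principle and Logic Programs
   with Aggregates". -/

namespace Alog

/-- The arithmetic relations allowed in aggregate atoms. -/
inductive AggRel : Type
  | gt | ge | lt | le | eq | ne

/-- Evaluation of an arithmetic relation on integers. -/
def AggRel.eval : AggRel → ℤ → ℤ → Prop
  | .gt, x, y => x > y
  | .ge, x, y => x ≥ y
  | .lt, x, y => x < y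
  | .le, x, y => x ≤ y
  | .eq, x, y => x = y
  | .ne, x, y => x ≠ y

/-- A ground aggregate atom `f{X̄ : cond} ⊙ n`.  `cond t` is the set of atoms
of the instance `cond(t̄)` of the condition at the tuple `t̄` of ground terms
(the type `Term` plays the role of tuples of ground terms). -/
structure AggAtom (Term Atom : Type) where
  f : Set Term → ℤ
  cond : Term → Set Atom
  rel : AggRel
  n : ℤ

variable {Term Atom : Type}

/-- An aggregate atom is true in a set `S` of ground atoms iff
`f({t̄ : every atom of cond(t̄) is in S}) ⊙ n` holds. -/
def AggAtom.trueIn (g : AggAtom Term Atom) (S : Set Atom) : Prop :=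
  g.rel.eval (g.f {t | g.cond t ⊆ S}) g.n

/-- The atoms replacing an aggregate atom in the aggregate reduct w.r.t. `S`:
all atoms of the instances `cond(t̄)` with every atom of `cond(t̄)` in `S`. -/
def AggAtom.reductAtoms (g : AggAtom Term Atom) (S : Set Atom) : Set Atom :=
  ⋃ t ∈ {t | g.cond t ⊆ S}, g.cond t

/-- A ground Alog rule: a disjunctive head, positive body atoms, atoms under
default negation, and aggregate atoms. -/
structure Rule (Term Atom : Type) where
  head : Set Atom
  pos : Set Atom
  neg : Set Atom
  agg : Set (AggAtom Term Atom)

/-- The body of a rule is satisfied by `S`. -/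
def Rule.bodySat (r : Rule Term Atom) (S : Set Atom) : Prop :=
  r.pos ⊆ S ∧ (∀ a ∈ r.neg, a ∉ S) ∧ (∀ g ∈ r.agg, g.trueIn S)

/-- A rule is satisfied by `S`: if the body is satisfied then some head atom is in `S`. -/
def Rule.sat (r : Rule Term Atom) (S : Set Atom) : Prop :=
  r.bodySat S → ∃ a ∈ r.head, a ∈ S

/-- The aggregate reduct of a single (kept) rule w.r.t. `S`: every aggregate
atom is replaced by its reduct, added to the positive body. -/
def Rule.aggReduct (r : Rule Term Atom) (S : Set Atom) : Rule Term Atom :=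
  ⟨r.head, r.pos ∪ ⋃ g ∈ r.agg, g.reductAtoms S, r.neg, ∅⟩

/-- The aggregate reduct of a program w.r.t. `S`: rules containing an aggregate
atom false in `S` are removed; in the remaining rules every aggregate atom is
replaced by its reduct w.r.t. `S`. -/
def aggReduct (P : Set (Rule Term Atom)) (S : Set Atom) : Set (Rule Term Atom) :=
  (fun r => r.aggReduct S) '' {r ∈ P | ∀ g ∈ r.agg, g.trueIn S}

/-- The Gelfond–Lifschitz reduct of a program w.r.t. `S`: rules whose `neg`
meets `S` are removed, and `neg` is deleted from the remaining rules. -/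
def glReduct (P : Set (Rule Term Atom)) (S : Set Atom) : Set (Rule Term Atom) :=
  (fun r => { r with neg := ∅ }) '' {r ∈ P | ∀ a ∈ r.neg, a ∉ S}

/-- `S` satisfies every rule of the program `P`. -/
def isModel (S : Set Atom) (P : Set (Rule Term Atom)) : Prop :=
  ∀ r ∈ P, r.sat S

/-- Standard (Gelfond–Lifschitz) answer set: `S` is a minimal set of atoms
satisfying every rule of the GL reduct of the program w.r.t. `S`. -/
def standardAnswerSet (S : Set Atom) (P : Set (Rule Term Atom)) : Prop :=
  isModel S (glReduct P S) ∧ ∀ T ⊆ S, isModel T (glReduct P S) → T = S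

/-- `S` is an answer set of a ground Alog program `P` iff `S` is a standard
answer set of the aggregate reduct of `P` w.r.t. `S`. -/
def answerSet (S : Set Atom) (P : Set (Rule Term Atom)) : Prop :=
  standardAnswerSet S (aggReduct P S)

end Alog


/-! If `A₁ ⊆ A₂` and `A₁` satisfies the body of a rule `r^{A₂}` of the aggregate reduct w.r.t. `A₂`,
then `A₁` contains every instance of an aggregate's condition that holds in `A₂`, so each aggregate
atom of `r` has the same satisfied instances in `A₁` as in `A₂`. Hence `r^{A₂} = r^{A₁}` is a rule of
the aggregate reduct w.r.t. `A₁`, which the answer set `A₁` satisfies. -/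

namespace Alog

variable {Term Atom : Type} {S T : Set Atom}

namespace AggAtom

variable {g : AggAtom Term Atom}

theorem setOf_cond_subset_eq_of_reductAtoms_subset (hST : S ⊆ T) (hg : g.reductAtoms T ⊆ S) :
    {t | g.cond t ⊆ S} = {t | g.cond t ⊆ T} :=
  Set.Subset.antisymm (fun _ ht => ht.trans hST)
    (fun _ ht => (Set.subset_biUnion_of_mem ht).trans hg)

theorem trueIn_iff_of_reductAtoms_subset (hST : S ⊆ T) (hg : g.reductAtoms T ⊆ S) :
    g.trueIn S ↔ g.trueIn T := by
  rw [trueIn, trueIn, setOf_cond_subset_eq_of_reductAtoms_subset hST hg]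

theorem reductAtoms_eq_of_reductAtoms_subset (hST : S ⊆ T) (hg : g.reductAtoms T ⊆ S) :
    g.reductAtoms S = g.reductAtoms T := by
  rw [reductAtoms, reductAtoms, setOf_cond_subset_eq_of_reductAtoms_subset hST hg]

end AggAtom

namespace Rule

variable {r : Rule Term Atom}

theorem aggReduct_eq_of_reductAtoms_subset (hST : S ⊆ T)
    (h : ⋃ g ∈ r.agg, g.reductAtoms T ⊆ S) : r.aggReduct S = r.aggReduct T := by
  have hred : ⋃ g ∈ r.agg, g.reductAtoms S = ⋃ g ∈ r.agg, g.reductAtoms T :=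
    Set.iUnion₂_congr fun _ hg =>
      AggAtom.reductAtoms_eq_of_reductAtoms_subset hST ((Set.subset_biUnion_of_mem hg).trans h)
  rw [aggReduct, aggReduct, hred]

theorem aggReduct_mem_aggReduct_of_reductAtoms_subset {P : Set (Rule Term Atom)} (hr : r ∈ P)
    (htrue : ∀ g ∈ r.agg, g.trueIn T) (hST : S ⊆ T) (h : ⋃ g ∈ r.agg, g.reductAtoms T ⊆ S) :
    r.aggReduct T ∈ Alog.aggReduct P S := by
  refine ⟨r, ⟨hr, fun g hg => ?_⟩, aggReduct_eq_of_reductAtoms_subset hST h⟩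
  exact (AggAtom.trueIn_iff_of_reductAtoms_subset hST
    ((Set.subset_biUnion_of_mem hg).trans h)).2 (htrue g hg)

end Rule

theorem isModel_of_isModel_glReduct {P : Set (Rule Term Atom)} (h : isModel S (glReduct P S)) :
    isModel S P := fun r hr ⟨hpos, hneg, hagg⟩ =>
  h { r with neg := ∅ } ⟨r, ⟨hr, hneg⟩, rfl⟩
    ⟨hpos, fun a ha => absurd ha (Set.notMem_empty a), hagg⟩

end Alog

theorem subset_answerSet_sat_reduct_general {Term Atom : Type}
    (P : Set (Alog.Rule Term Atom))
    (A₁ A₂ : Set Atom)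
    (h1 : Alog.answerSet A₁ P)
    (hsub : A₁ ⊆ A₂) :
    ∀ r ∈ Alog.aggReduct P A₂, r.sat A₁ := by
  rintro _ ⟨r, ⟨hrP, htrue⟩, rfl⟩ hbody
  have hred : ⋃ g ∈ r.agg, g.reductAtoms A₂ ⊆ A₁ := (Set.union_subset_iff.1 hbody.1).2
  have hmem : r.aggReduct A₂ ∈ Alog.aggReduct P A₁ :=
    r.aggReduct_mem_aggReduct_of_reductAtoms_subset hrP htrue hsub hred
  exact Alog.isModel_of_isModel_glReduct h1.1 _ hmem hbody

/-- Let `A₁` and `A₂` be answer sets of a ground Alog program `Π`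
with `A₁ ⊆ A₂`.  Then `A₁` satisfies every rule of the aggregate reduct of `Π`
with respect to `A₂`. -/
theorem subset_answerSet_sat_reduct {Term Atom : Type}
    (P : Set (Alog.Rule Term Atom)) (hfin : P.Finite)
    (A₁ A₂ : Set Atom)
    (h1 : Alog.answerSet A₁ P) (h2 : Alog.answerSet A₂ P)
    (hsub : A₁ ⊆ A₂) :
    ∀ r ∈ Alog.aggReduct P A₂, r.sat A₁ :=
  subset_answerSet_sat_reduct_general P A₁ A₂ h1 hsub
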